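/- arXiv:0811.3503 — 7 statements merged into one kernel-verified Lean document; each statement's English description precedes it below -/
import Mathlib

section
/- Let G be a group, H a subgroup of G, and Y an H-space. Equip G × Y with the product topology where G is discrete, and let G ×_H Y be the quotient by the smallest equivalence relation with (gh, y) ∼ (g, h·y) for all g ∈ G, h ∈ H, y ∈ Y, with G acting by left multiplication on the first factor. If Y is H-Noetherian, then G ×_H Y is G-Noetherian. -/
/-- A topological space with an action `act : G → X → X` is `G`-Noetherian if every
descending chain of closed `G`-stable subsets stabilises. -/
def IsTopGNoetherian {G X : Type*} [TopologicalSpace X] (act : G → X → X) : Prop :=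
  ∀ C : ℕ → Set X,
    (∀ n, IsClosed (C n)) →
    (∀ n, C (n + 1) ⊆ C n) →
    (∀ n g x, x ∈ C n → act g x ∈ C n) →
    ∃ m, ∀ n, m ≤ n → C n = C m

/-- The relation on `G × Y` whose generated equivalence identifies `(g * h, y)`
with `(g, h • y)` for `h ∈ H`. -/
def balancedRel {G Y : Type*} [Group G] (H : Subgroup G) [MulAction H Y] :
    G × Y → G × Y → Prop :=
  fun p q => ∃ h : H, p.1 = q.1 * (h : G) ∧ q.2 = h • p.2

/-- The quotient topology on `G ×_H Y := (G × Y)/∼`, where `G` carries the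
discrete topology and `G × Y` the product topology. -/
def balancedProdTopology {G Y : Type*} [Group G] (H : Subgroup G) [MulAction H Y]
    [TopologicalSpace Y] : TopologicalSpace (Quot (balancedRel (Y := Y) H)) :=
  (@instTopologicalSpaceProd G Y ⊥ inferInstance).coinduced (Quot.mk _)

/-- The `G`-action on `G ×_H Y` by left multiplication on the first factor. -/
def balancedAct {G Y : Type*} [Group G] (H : Subgroup G) [MulAction H Y] (g' : G) :
    Quot (balancedRel (Y := Y) H) → Quot (balancedRel (Y := Y) H) :=
  Quot.map (fun p => (g' * p.1, p.2)) (by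
    rintro p q ⟨h, h1, h2⟩
    exact ⟨h, by simp only []; rw [h1, mul_assoc], h2⟩)

/-- if `Y` is `H`-Noetherian then `G ×_H Y` is `G`-Noetherian. -/
theorem topGNoetherian_balancedProd
    {G Y : Type*} [Group G] (H : Subgroup G) [MulAction H Y] [TopologicalSpace Y]
    (hcont : ∀ h : H, Continuous fun y : Y => h • y)
    (hY : IsTopGNoetherian (fun (h : H) (y : Y) => h • y)) :
    @IsTopGNoetherian G _ (balancedProdTopology (Y := Y) H) (balancedAct (Y := Y) H) := by
  intro C hCcl hCdesc hCstab
  letI : TopologicalSpace G := ⊥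
  letI : TopologicalSpace (Quot (balancedRel (Y := Y) H)) := balancedProdTopology H
  set π : G × Y → Quot (balancedRel (Y := Y) H) := Quot.mk _ with hπdef
  have hπ : Continuous π := continuous_coinduced_rng
  have hact : ∀ (g' g : G) (y : Y),
      balancedAct (Y := Y) H g' (π (g, y)) = π (g' * g, y) := fun _ _ _ => rfl
  have key : ∀ (g : G) (h : H) (y : Y), π (g * (h : G), y) = π (g, h • y) :=
    fun g h y => Quot.sound ⟨h, rfl, rfl⟩
  set D : ℕ → Set Y := fun n => {y | π (1, y) ∈ C n} with hDdef
  have hf : Continuous (fun y : Y => π (1, y)) :=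
    hπ.comp (Continuous.prodMk_right (1 : G))
  have hmem : ∀ (n : ℕ) (g : G) (y : Y), π (g, y) ∈ C n ↔ y ∈ D n := by
    intro n g y
    constructor
    · intro hx
      have := hCstab n g⁻¹ _ hx
      rw [hact, inv_mul_cancel] at this
      exact this
    · intro hy
      have := hCstab n g _ hy
      rw [hact, mul_one] at this
      exact this
  have hDcl : ∀ n, IsClosed (D n) := fun n => (hCcl n).preimage hf
  have hDdesc : ∀ n, D (n + 1) ⊆ D n := fun n y hy => hCdesc n hy
  have hDstab : ∀ (n : ℕ) (h : H) (y : Y), y ∈ D n → h • y ∈ D n := by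
    intro n h y hy
    have h1 : π (1, h • y) = π ((h : G), y) := by
      have := key 1 h y
      rw [one_mul] at this
      exact this.symm
    show π (1, h • y) ∈ C n
    rw [h1, hmem]
    exact hy
  obtain ⟨m, hm⟩ := hY D hDcl hDdesc hDstab
  refine ⟨m, fun n hn => ?_⟩
  ext x
  induction x using Quot.ind with | _ p => ?_
  obtain ⟨g, y⟩ := p
  show π (g, y) ∈ C n ↔ π (g, y) ∈ C m
  rw [hmem, hmem, hm n hn]
end

section
/- If R is a G-Noetherian ring, then the polynomial ring R[X], where G acts on coefficients only (fixing X), is G-Noetherian. -/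
/-!
Hilbert's argument with `G`-stable ideals. For a chain `I n` of `G`-stable ideals of `R[X]`, the
ideals `J n d` of `d`-th coefficients of elements of `I n` of degree `≤ d` are `G`-stable (the
action commutes with taking coefficients and does not raise degrees) and increase in both `n`
and `d`. Stabilising each row `J · d` for `d` below the stabilisation index `N` of the diagonal
`J n n` stabilises the whole array, and two nested ideals with the same arrays coincide by
induction on the degree.
-/

/-- A commutative ring with an action `act : G → R → R` is `G`-Noetherian if every
ascending chain of `G`-stable ideals stabilises. -/
def IsRingGNoetherian {G R : Type*} [CommRing R] (act : G → R → R) : Prop :=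
  ∀ I : ℕ → Ideal R,
    (∀ n, I n ≤ I (n + 1)) →
    (∀ n g x, x ∈ I n → act g x ∈ I n) →
    ∃ m, ∀ n, m ≤ n → I n = I m

open Polynomial

namespace Ideal

variable {R : Type*} [CommRing R]

theorem mem_leadingCoeffNth_iff_coeff (I : Ideal R[X]) (n : ℕ) (x : R) :
    x ∈ I.leadingCoeffNth n ↔ ∃ p ∈ I, p.degree ≤ n ∧ p.coeff n = x := by
  simp only [leadingCoeffNth, degreeLE, Submodule.mem_map, Submodule.mem_inf, mem_degreeLE,
    mem_ofPolynomial, lcoeff_apply]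
  exact exists_congr fun p => by tauto

theorem leadingCoeffNth_le_leadingCoeffNth {I J : Ideal R[X]} (hIJ : I ≤ J) {m n : ℕ}
    (hmn : m ≤ n) : I.leadingCoeffNth m ≤ J.leadingCoeffNth n :=
  (I.leadingCoeffNth_mono hmn).trans (Submodule.map_mono (inf_le_inf_left _ hIJ))

theorem map_mem_leadingCoeffNth {I : Ideal R[X]} {f : R →+* R} (hI : ∀ p ∈ I, p.map f ∈ I)
    {n : ℕ} {x : R} (hx : x ∈ I.leadingCoeffNth n) : f x ∈ I.leadingCoeffNth n := by
  rw [mem_leadingCoeffNth_iff_coeff] at hx ⊢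
  obtain ⟨p, hpI, hp, rfl⟩ := hx
  exact ⟨p.map f, hI p hpI, degree_map_le.trans hp, coeff_map f n⟩

theorem eq_of_le_of_leadingCoeffNth_le {I J : Ideal R[X]} (hIJ : I ≤ J)
    (h : ∀ n, J.leadingCoeffNth n ≤ I.leadingCoeffNth n) : I = J := by
  refine le_antisymm hIJ fun p hp => ?_
  suffices ∀ n : ℕ, ∀ p ∈ J, p.degree < n → p ∈ I from
    this (p.natDegree + 1) p hp <|
      degree_le_natDegree.trans_lt (WithBot.coe_lt_coe.2 p.natDegree.lt_succ_self)
  intro n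
  induction n with
  | zero =>
    intro p _ hp
    rw [Nat.cast_zero, Nat.WithBot.lt_zero_iff, degree_eq_bot] at hp
    simp [hp]
  | succ n ih =>
    intro p hpJ hp
    have hpn : p.degree ≤ n := Order.le_of_lt_succ (by exact_mod_cast hp)
    obtain ⟨q, hqI, hq, hqp⟩ := (mem_leadingCoeffNth_iff_coeff I n _).1 <|
      h n ((mem_leadingCoeffNth_iff_coeff J n _).2 ⟨p, hpJ, hpn, rfl⟩)
    have hle : (p - q).degree ≤ n := (degree_sub_le p q).trans (max_le hpn hq)
    have hpq : (p - q).degree < n := by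
      rw [degree_lt_iff_coeff_zero]
      intro m hm
      rcases hm.lt_or_eq with hm | rfl
      · exact coeff_eq_zero_of_degree_lt (hle.trans_lt (by exact_mod_cast hm))
      · rw [coeff_sub, hqp, sub_self]
    simpa using add_mem (ih (p - q) (sub_mem hpJ (hIJ hqI)) hpq) hqI

end Ideal

theorem exists_forall_eq_of_stable_rows_of_stable_diag {α : Type*} [PartialOrder α]
    {J : ℕ → ℕ → α} (hJ : ∀ ⦃m n d e⦄, m ≤ n → d ≤ e → J m d ≤ J n e)
    (hrow : ∀ d, ∃ m, ∀ n, m ≤ n → J n d = J m d)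
    (hdiag : ∃ N, ∀ n, N ≤ n → J n n = J N N) :
    ∃ M, ∀ n, M ≤ n → ∀ d, J n d = J M d := by
  choose r hr using hrow
  obtain ⟨N, hN⟩ := hdiag
  -- For `n, d ≥ N`: `J N N ≤ J n d ≤ J k k = J N N` with `k = max n d`.
  have hcorner : ∀ n d, N ≤ n → N ≤ d → J n d = J N N := fun n d hn hd =>
    le_antisymm ((hJ (le_max_left n d) (le_max_right n d)).trans
      (hN _ (hn.trans (le_max_left n d))).le) (hJ hn hd)
  refine ⟨max N ((Finset.range N).sup r), fun n hn d => ?_⟩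
  have hNn : N ≤ n := le_of_max_le_left hn
  rcases lt_or_ge d N with hd | hd
  · have hrd : r d ≤ max N ((Finset.range N).sup r) :=
      (Finset.le_sup (Finset.mem_range.2 hd)).trans (le_max_right _ _)
    rw [hr d n (hrd.trans hn), hr d _ hrd]
  · rw [hcorner n d hNn hd, hcorner _ d (le_max_left _ _) hd]

/-- if `R` is `G`-Noetherian then so is `R[X]`, with `G` acting
coefficientwise (fixing `X`). -/
theorem ringGNoetherian_polynomial
    {G R : Type*} [Group G] [CommRing R] [MulSemiringAction G R]
    (hR : IsRingGNoetherian (fun (g : G) (r : R) => g • r)) :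
    IsRingGNoetherian
      (fun (g : G) (p : Polynomial R) => p.map (MulSemiringAction.toRingHom G R g)) := by
  intro I hI hIstab
  have hImono : Monotone I := monotone_nat_of_le_succ hI
  set J : ℕ → ℕ → Ideal R := fun n d => (I n).leadingCoeffNth d
  have hJ : ∀ ⦃m n d e⦄, m ≤ n → d ≤ e → J m d ≤ J n e := fun _ _ _ _ hmn hde =>
    Ideal.leadingCoeffNth_le_leadingCoeffNth (hImono hmn) hde
  have hJstab : ∀ φ ψ : ℕ → ℕ, Monotone φ → Monotone ψ →
      ∃ m, ∀ n, m ≤ n → J (φ n) (ψ n) = J (φ m) (ψ m) := fun φ ψ hφ hψ =>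
    hR (fun n => J (φ n) (ψ n)) (fun n => hJ (hφ n.le_succ) (hψ n.le_succ))
      fun n g _ hx => Ideal.map_mem_leadingCoeffNth (hIstab (φ n) g) hx
  obtain ⟨M, hM⟩ := exists_forall_eq_of_stable_rows_of_stable_diag hJ
    (fun d => hJstab id (fun _ => d) monotone_id monotone_const)
    (hJstab id id monotone_id monotone_id)
  exact ⟨M, fun n hn => (Ideal.eq_of_le_of_leadingCoeffNth_le (hImono hn)
    fun d => (hM n hn d).le).symm⟩
end

section
/- Let K be a field, R a K-algebra with an action of a group G by K-algebra automorphisms, and suppose the K-points A(K) of Spec R, with the Zariski topology, form a G-Noetherian topological space. Then for every G-stable ideal I of R there exist finitely many elements f_1, ..., f_l ∈ I such that a point y ∈ A(K) lies in the zero set of I if and only if f_i(g·y) = 0 for all i = 1,...,l and all g ∈ G. -/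
/-- The Zariski topology on the set `A(K) = Hom_{K-alg}(R, K)` of `K`-rational
points of `Spec R`: closed sets are common zero sets of subsets of `R`. -/
def zariskiTopology (K R : Type*) [CommRing K] [CommRing R] [Algebra K R] :
    TopologicalSpace (R →ₐ[K] K) :=
  TopologicalSpace.generateFrom {U | ∃ f : R, U = {y : R →ₐ[K] K | y f ≠ 0}}

/-!
The sets `Z(f) = {y | f(g • y) = 0 for all g}` are closed and `G`-stable, and since `I` is
`G`-stable its zero set is `⋂_{f ∈ I} Z(f)`. `G`-Noetherianity is the descending chain condition
on closed `G`-stable sets, so among the finite intersections `⋂_{f ∈ t} Z(f)`, `t ⊆ I` finite,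
there is a minimal one; minimality forces it into every `Z(f)` with `f ∈ I`, i.e. onto the zero
set of `I`.
-/

open Set

attribute [local instance] zariskiTopology

section GNoetherian

variable {G X : Type*} [TopologicalSpace X] {act : G → X → X}

theorem IsTopGNoetherian.wellFoundedLT (h : IsTopGNoetherian act) :
    WellFoundedLT {C : Set X // IsClosed C ∧ ∀ g, ∀ x ∈ C, act g x ∈ C} := by
  rw [← wellFoundedGT_dual_iff, wellFoundedGT_iff_monotone_chain_condition]
  intro C
  obtain ⟨m, hm⟩ := h (fun n => (OrderDual.ofDual (C n)).1) (fun n => (C n).2.1)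
    (fun n => C.monotone n.le_succ) (fun n => (C n).2.2)
  exact ⟨m, fun n hn => (Subtype.ext (hm n hn)).symm⟩

theorem IsTopGNoetherian.exists_finite_biInter_eq (h : IsTopGNoetherian act) {ι : Type*}
    (s : Set ι) (C : ι → Set X) (hC : ∀ i, IsClosed (C i))
    (hCact : ∀ i g, ∀ x ∈ C i, act g x ∈ C i) :
    ∃ t ⊆ s, t.Finite ∧ ⋂ i ∈ t, C i = ⋂ i ∈ s, C i := by
  have := h.wellFoundedLT
  let D (t : Set ι) : {C : Set X // IsClosed C ∧ ∀ g, ∀ x ∈ C, act g x ∈ C} :=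
    ⟨⋂ i ∈ t, C i, isClosed_biInter fun i _ => hC i,
      fun g x hx => mem_iInter₂.2 fun i hi => hCact i g x (mem_iInter₂.1 hx i hi)⟩
  obtain ⟨-, ⟨t, hts, ht, rfl⟩, hmin⟩ :=
    exists_minimal_of_wellFoundedLT (fun E => ∃ t ⊆ s, t.Finite ∧ D t = E)
      ⟨_, ∅, empty_subset s, finite_empty, rfl⟩
  refine ⟨t, hts, ht, (biInter_subset_biInter_left hts).antisymm' (subset_iInter₂ fun i hi => ?_)⟩
  have hle : D (insert i t) ≤ D t := biInter_subset_biInter_left (subset_insert i t)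
  calc ⋂ j ∈ t, C j ⊆ ⋂ j ∈ insert i t, C j :=
        hmin ⟨insert i t, insert_subset hi hts, ht.insert i, rfl⟩ hle
    _ ⊆ C i := biInter_subset_of_mem (mem_insert i t)

end GNoetherian

section Zariski

variable {G : Type*} [Group G] {K R : Type*} [CommRing K] [CommRing R] [Algebra K R]

theorem isClosed_setOf_apply_eq_zero (f : R) : IsClosed {y : R →ₐ[K] K | y f = 0} :=
  isOpen_compl_iff.1 (TopologicalSpace.GenerateOpen.basic _ ⟨f, by ext; simp⟩)

def orbitZeroLocus (ρ : G →* (R ≃ₐ[K] R)) (f : R) : Set (R →ₐ[K] K) :=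
  {y | ∀ g, (y.comp (ρ g⁻¹).toAlgHom) f = 0}

variable (ρ : G →* (R ≃ₐ[K] R))

theorem isClosed_orbitZeroLocus (f : R) : IsClosed (orbitZeroLocus ρ f) := by
  rw [orbitZeroLocus, ofPred_forall]
  exact isClosed_iInter fun g => isClosed_setOf_apply_eq_zero _

theorem comp_mem_orbitZeroLocus {f : R} (g : G) {y : R →ₐ[K] K} (hy : y ∈ orbitZeroLocus ρ f) :
    y.comp (ρ g⁻¹).toAlgHom ∈ orbitZeroLocus ρ f := by
  intro g'
  simpa [mul_inv_rev] using hy (g' * g)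

theorem biInter_orbitZeroLocus {I : Ideal R} (hI : ∀ g, ∀ x ∈ I, ρ g x ∈ I) :
    ⋂ f ∈ (I : Set R), orbitZeroLocus ρ f = {y | ∀ x ∈ I, y x = 0} := by
  ext y
  simp only [mem_iInter, mem_ofPred_eq]
  exact ⟨fun hy x hx => by simpa using hy x hx 1, fun hy x hx g => hy _ (hI g⁻¹ x hx)⟩

end Zariski

/-- if `A(K)` with the Zariski topology is `G`-Noetherian, then
every `G`-stable ideal `I` of `R` admits finitely many elements `f₁, …, f_l ∈ I`
such that `y` lies in the zero set of `I` iff `fᵢ(g • y) = 0` for all `i` and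
all `g ∈ G`. -/
theorem finitely_many_equations_of_topGNoetherian
    {G : Type*} [Group G] (K R : Type*) [Field K] [CommRing R] [Algebra K R]
    (ρ : G →* (R ≃ₐ[K] R))
    (hA : @IsTopGNoetherian G (R →ₐ[K] K) (zariskiTopology K R)
      (fun (g : G) (y : R →ₐ[K] K) => y.comp (ρ g⁻¹).toAlgHom))
    (I : Ideal R) (hI : ∀ (g : G), ∀ x ∈ I, ρ g x ∈ I) :
    ∃ (l : ℕ) (f : Fin l → R), (∀ i, f i ∈ I) ∧
      ∀ y : R →ₐ[K] K,
        ((∀ x ∈ I, y x = 0) ↔ ∀ (i : Fin l) (g : G), (y.comp (ρ g⁻¹).toAlgHom) (f i) = 0) := by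
  obtain ⟨t, htI, ht, hZ⟩ := hA.exists_finite_biInter_eq (I : Set R) (orbitZeroLocus ρ)
    (isClosed_orbitZeroLocus ρ) fun _ g _ => comp_mem_orbitZeroLocus ρ g
  obtain ⟨l, f, -, rfl⟩ := ht.fin_param
  refine ⟨l, f, fun i => htI (mem_range_self i), fun y => ?_⟩
  rw [biInter_orbitZeroLocus ρ hI] at hZ
  simpa [orbitZeroLocus] using (Set.ext_iff.1 hZ y).symm
end

section
/- Conversely to the previous statement: if for every G-stable ideal I of the K-algebra R there exist finitely many f_1, ..., f_l ∈ I such that y ∈ A(K) lies in the zero set of I iff f_i(g·y) = 0 for all i and all g ∈ G, then A(K) with the Zariski topology is a G-Noetherian topological space. -/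
/-!
The vanishing ideals of a descending chain of closed `G`-stable sets `C n` form an ascending chain
of `G`-stable ideals. The finitely many equations cutting out the zero set of their union already
lie in one of them, say that of `C m`; as a Zariski-closed set is the zero set of its vanishing
ideal, every `C n` with `n ≥ m` then contains `C m`.
-/

open Topology

theorem Submodule.exists_forall_mem_of_mem_iSup {R M ι κ : Type*} [Semiring R] [AddCommMonoid M]
    [Module R M] [Finite ι] [Preorder κ] [Nonempty κ] [IsDirectedOrder κ] {p : κ → Submodule R M} (hp : Monotone p) {f : ι → M}
    (hf : ∀ i, f i ∈ ⨆ n, p n) : ∃ m, ∀ i, f i ∈ p m := by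
  choose n hn using fun i => (Submodule.mem_iSup_of_directed p hp.directed_le).1 (hf i)
  obtain ⟨m, hm⟩ := hp.directed_le.finite_le n
  exact ⟨m, fun i => hm i (hn i)⟩

theorem Submodule.apply_mem_iSup {R M ι F : Type*} [Semiring R] [AddCommMonoid M] [Module R M]
    [FunLike F M M] [AddMonoidHomClass F M M] {p : ι → Submodule R M} {σ : F}
    (hσ : ∀ n, ∀ x ∈ p n, σ x ∈ p n) {x : M} (hx : x ∈ ⨆ n, p n) : σ x ∈ ⨆ n, p n := by
  refine Submodule.iSup_induction p (motive := fun x => σ x ∈ ⨆ n, p n) hx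
    (fun n x hx => Submodule.mem_iSup_of_mem n (hσ n x hx)) (by simp) fun x y hx hy => ?_
  simpa using add_mem hx hy

def vanishingIdeal {K R : Type*} [CommRing K] [CommRing R] [Algebra K R]
    (C : Set (R →ₐ[K] K)) : Ideal R :=
  ⨅ y ∈ C, RingHom.ker y

section VanishingIdeal

variable {K R : Type*} [CommRing K] [CommRing R] [Algebra K R]

theorem mem_vanishingIdeal {C : Set (R →ₐ[K] K)} {f : R} :
    f ∈ vanishingIdeal C ↔ ∀ y ∈ C, y f = 0 := by
  simp only [vanishingIdeal, Submodule.mem_iInf, RingHom.mem_ker]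

theorem vanishingIdeal_anti : Antitone (vanishingIdeal : Set (R →ₐ[K] K) → Ideal R) :=
  fun _ _ hCD _ hf => mem_vanishingIdeal.2 fun y hy => mem_vanishingIdeal.1 hf y (hCD hy)

theorem map_mem_vanishingIdeal {G : Type*} [Group G] (ρ : G →* (R ≃ₐ[K] R))
    {C : Set (R →ₐ[K] K)} (hC : ∀ (g : G) y, y ∈ C → y.comp (ρ g⁻¹).toAlgHom ∈ C)
    (g : G) {x : R} (hx : x ∈ vanishingIdeal C) : ρ g x ∈ vanishingIdeal C :=
  mem_vanishingIdeal.2 fun y hy => by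
    simpa using mem_vanishingIdeal.1 hx _ (hC g⁻¹ y hy)

end VanishingIdeal

section Zariski

variable {K R : Type*} [CommRing K] [IsDomain K] [CommRing R] [Algebra K R]

/-- The basic open sets `{y | y f ≠ 0}` already form a basis of the Zariski topology, since they
are stable under finite intersections: `y (f * g) ≠ 0 ↔ y f ≠ 0 ∧ y g ≠ 0`. -/
theorem exists_basicOpen_subset_of_isOpen {U : Set (R →ₐ[K] K)}
    (hU : IsOpen[zariskiTopology K R] U) {y : R →ₐ[K] K} (hy : y ∈ U) :
    ∃ f : R, y f ≠ 0 ∧ ∀ z : R →ₐ[K] K, z f ≠ 0 → z ∈ U := by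
  induction hU generalizing y with
  | basic s hs =>
    obtain ⟨f, rfl⟩ := hs
    exact ⟨f, hy, fun _ hz => hz⟩
  | univ => exact ⟨1, by simp, fun _ _ => trivial⟩
  | inter s t _ _ ihs iht =>
    obtain ⟨f, hyf, hf⟩ := ihs hy.1
    obtain ⟨g, hyg, hg⟩ := iht hy.2
    refine ⟨f * g, by simp [hyf, hyg], fun z hz => ?_⟩
    rw [map_mul, mul_ne_zero_iff] at hz
    exact ⟨hf z hz.1, hg z hz.2⟩
  | sUnion S _ ih =>
    obtain ⟨s, hs, hys⟩ := hy
    obtain ⟨f, hyf, hf⟩ := ih s hs hys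
    exact ⟨f, hyf, fun z hz => ⟨s, hs, hf z hz⟩⟩

theorem mem_of_forall_mem_vanishingIdeal {C : Set (R →ₐ[K] K)}
    (hC : IsClosed[zariskiTopology K R] C) {y : R →ₐ[K] K}
    (hy : ∀ f ∈ vanishingIdeal C, y f = 0) : y ∈ C := by
  by_contra hyC
  obtain ⟨f, hyf, hf⟩ := exists_basicOpen_subset_of_isOpen hC.isOpen_compl hyC
  exact hyf <| hy f <| mem_vanishingIdeal.2 fun z hz => not_not.1 fun hzf => hf z hzf hz

end Zariski

/-- converse of Statement 11: if every `G`-stable ideal `I` of `R`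
admits finitely many elements `f₁, …, f_l ∈ I` such that `y` lies in the zero set
of `I` iff `fᵢ(g • y) = 0` for all `i` and `g`, then `A(K)` with the Zariski
topology is a `G`-Noetherian topological space. -/
theorem topGNoetherian_of_finitely_many_equations
    {G : Type*} [Group G] (K R : Type*) [Field K] [CommRing R] [Algebra K R]
    (ρ : G →* (R ≃ₐ[K] R))
    (h : ∀ I : Ideal R, (∀ (g : G), ∀ x ∈ I, ρ g x ∈ I) →
      ∃ (l : ℕ) (f : Fin l → R), (∀ i, f i ∈ I) ∧
        ∀ y : R →ₐ[K] K,
          ((∀ x ∈ I, y x = 0) ↔ ∀ (i : Fin l) (g : G), (y.comp (ρ g⁻¹).toAlgHom) (f i) = 0)) :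
    @IsTopGNoetherian G (R →ₐ[K] K) (zariskiTopology K R)
      (fun (g : G) (y : R →ₐ[K] K) => y.comp (ρ g⁻¹).toAlgHom) := by
  intro C hC hdesc hstab
  have hanti : Antitone C := antitone_nat_of_succ_le hdesc
  obtain ⟨l, f, hfJ, hzero⟩ := h (⨆ n, vanishingIdeal (C n))
    fun g _ hx => Submodule.apply_mem_iSup (fun n _ => map_mem_vanishingIdeal ρ (hstab n) g) hx
  obtain ⟨m, hm⟩ := Submodule.exists_forall_mem_of_mem_iSup
    (fun _ _ hab => vanishingIdeal_anti (hanti hab)) hfJ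
  refine ⟨m, fun n hn => (hanti hn).antisymm fun y hy => ?_⟩
  refine mem_of_forall_mem_vanishingIdeal (hC n) fun x hx => ?_
  exact (hzero y).2 (fun i g => mem_vanishingIdeal.1 (hm i) _ (hstab m g y hy)) x
    (Submodule.mem_iSup_of_mem n hx)
end

section
/- Let R be a K-algebra acted upon by groups G and H by K-algebra automorphisms, with commuting actions, such that H acts locally finitely and completely reducibly on R. If R is G-Noetherian, then the invariant ring R^H (which is G-stable since the actions commute) is G-Noetherian. -/
section Defs

variable {K R H : Type*} [Field K] [CommRing R] [Algebra K R] [Group H]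

/-- A `K`-subspace of `R` is `H`-stable (for the action `ρH`) if it is preserved
by every element of `H`. -/
def HStable (ρH : H →* (R ≃ₐ[K] R)) (U : Submodule K R) : Prop :=
  ∀ h : H, ∀ u ∈ U, ρH h u ∈ U

/-- `W` is an irreducible `H`-submodule: nonzero, `H`-stable, and with no proper
nonzero `H`-stable subspace. -/
def HIrreducible (ρH : H →* (R ≃ₐ[K] R)) (W : Submodule K R) : Prop :=
  W ≠ ⊥ ∧ HStable ρH W ∧ ∀ W' ≤ W, HStable ρH W' → W' = ⊥ ∨ W' = W

/-- The subalgebra `R^H` of `H`-invariants of `R`. -/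
def invariantsSubalgebra (ρH : H →* (R ≃ₐ[K] R)) : Subalgebra K R where
  carrier := {a | ∀ h : H, ρH h a = a}
  mul_mem' := by intro a b ha hb h; rw [map_mul, ha h, hb h]
  add_mem' := by intro a b ha hb h; rw [map_add, ha h, hb h]
  algebraMap_mem' := fun r h => (ρH h).commutes r

end Defs

/-! Complete reducibility splits `R`, as a `K`-vector space, into `R^H` and the sum `T` of the
non-trivial irreducible `H`-submodules. Multiplication by an invariant is `H`-equivariant, and
equivariant maps send `T` into `T`, so the projection onto `R^H` along `T` (the Reynolds
operator) is an `R^H`-linear retraction of `R` onto `R^H`. Such a retraction makes every ideal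
of `R^H` the contraction of its extension to `R`; extensions of `G`-stable ideals are
`G`-stable because the actions commute, so chains in `R^H` stabilise along with their
extensions. -/

open Submodule

namespace Ideal

variable {A B : Type*} [CommRing A] [CommRing B] [Algebra A B]

theorem comap_map_eq_self_of_retraction (ρ : B →ₗ[A] A)
    (hρ : ∀ a, ρ (algebraMap A B a) = a) (I : Ideal A) :
    (I.map (algebraMap A B)).comap (algebraMap A B) = I := by
  refine le_antisymm (fun a ha => ?_) le_comap_map
  -- Induct with the multiplier `b` generalized, so that the `B`-multiples in the span are handled.
  have key : ∀ x ∈ I.map (algebraMap A B), ∀ b, ρ (b * x) ∈ I := by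
    intro x hx
    induction hx using Submodule.span_induction with
    | mem _ hx =>
      obtain ⟨a, ha, rfl⟩ := hx
      intro b
      rw [mul_comm, ← Algebra.smul_def, map_smul, smul_eq_mul]
      exact I.mul_mem_right _ ha
    | zero => simp
    | add x y _ _ hx hy => intro b; rw [mul_add, map_add]; exact add_mem (hx b) (hy b)
    | smul c x _ hx => intro b; rw [smul_eq_mul, ← mul_assoc]; exact hx (b * c)
  simpa [hρ] using key _ ha 1

end Ideal

section Invariants

variable {K R H : Type*} [Field K] [CommRing R] [Algebra K R] [Group H]
  {ρH : H →* (R ≃ₐ[K] R)}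

theorem map_mem_invariantsSubalgebra {σ : R ≃ₐ[K] R}
    (hσ : ∀ (h : H) (r : R), σ (ρH h r) = ρH h (σ r)) {x : R}
    (hx : x ∈ invariantsSubalgebra ρH) : σ x ∈ invariantsSubalgebra ρH :=
  fun h => by rw [← hσ, hx h]

theorem map_algebraMap_invariantsSubalgebra_stable {σ : R ≃ₐ[K] R}
    (hσ : ∀ (h : H) (r : R), σ (ρH h r) = ρH h (σ r)) (I : Ideal (invariantsSubalgebra ρH))
    (hI : ∀ x ∈ I, ∀ y : invariantsSubalgebra ρH, (y : R) = σ (x : R) → y ∈ I) :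
    ∀ x ∈ I.map (algebraMap _ R), σ x ∈ I.map (algebraMap _ R) := by
  have hle : (I.map (algebraMap _ R)).map (σ : R →+* R) ≤ I.map (algebraMap _ R) := by
    rw [Ideal.map_map, Ideal.map_le_iff_le_comap]
    intro a ha
    exact Ideal.mem_map_of_mem _ (hI a ha ⟨σ a, map_mem_invariantsSubalgebra hσ a.2⟩ rfl)
  exact fun x hx => hle (Ideal.mem_map_of_mem _ hx)

variable (ρH) in
def invariantsSubmodule : Submodule K R := Subalgebra.toSubmodule (invariantsSubalgebra ρH)

variable (ρH) in
def nontrivialPart : Submodule K R :=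
  sSup {W | HIrreducible ρH W ∧ ¬ W ≤ invariantsSubmodule ρH}

theorem HStable.bot : HStable ρH (⊥ : Submodule K R) :=
  fun _ u hu => by simp [(mem_bot K).mp hu]

theorem hStable_invariantsSubmodule : HStable ρH (invariantsSubmodule ρH) := by
  intro h u hu
  rwa [hu h]

theorem HStable.inf {V V' : Submodule K R} (hV : HStable ρH V) (hV' : HStable ρH V') :
    HStable ρH (V ⊓ V') :=
  fun h u hu => ⟨hV h u hu.1, hV' h u hu.2⟩

theorem hStable_sSup {S : Set (Submodule K R)} (hS : ∀ V ∈ S, HStable ρH V) :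
    HStable ρH (sSup S) := by
  intro h
  suffices sSup S ≤ (sSup S).comap (ρH h).toLinearMap from fun u hu => this hu
  exact sSup_le fun V hV u hu => le_sSup hV (hS V hV h u hu)

theorem HStable.comap {f : R →ₗ[K] R} (hf : ∀ (h : H) (x : R), f (ρH h x) = ρH h (f x))
    {V : Submodule K R} (hV : HStable ρH V) : HStable ρH (V.comap f) := by
  intro h u hu
  rw [mem_comap, hf]
  exact hV h _ hu

theorem HStable.map {f : R →ₗ[K] R} (hf : ∀ (h : H) (x : R), f (ρH h x) = ρH h (f x))
    {V : Submodule K R} (hV : HStable ρH V) : HStable ρH (V.map f) := by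
  rintro h _ ⟨u, hu, rfl⟩
  exact ⟨ρH h u, hV h u hu, hf h u⟩

theorem HIrreducible.disjoint_or_le {W V : Submodule K R} (hW : HIrreducible ρH W)
    (hV : HStable ρH V) : Disjoint W V ∨ W ≤ V :=
  (hW.2.2 (W ⊓ V) inf_le_left (hW.2.1.inf hV)).imp disjoint_iff.mpr inf_eq_left.mp

theorem HIrreducible.map {f : R →ₗ[K] R} (hf : ∀ (h : H) (x : R), f (ρH h x) = ρH h (f x))
    {W : Submodule K R} (hW : HIrreducible ρH W) (hne : W.map f ≠ ⊥) :
    HIrreducible ρH (W.map f) := by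
  refine ⟨hne, hW.2.1.map hf, fun W' hW'le hW' => ?_⟩
  rcases hW.disjoint_or_le (hW'.comap hf) with hdis | hle
  · left
    rw [eq_bot_iff]
    intro y hy
    obtain ⟨w, hw, rfl⟩ := mem_map.mp (hW'le hy)
    rw [disjoint_def.mp hdis w hw hy, map_zero]
    exact zero_mem _
  · exact Or.inr (le_antisymm hW'le (map_le_iff_le_comap.mpr hle))

theorem HIrreducible.disjoint_invariantsSubmodule {W : Submodule K R} (hW : HIrreducible ρH W)
    (hWinv : ¬ W ≤ invariantsSubmodule ρH) : Disjoint W (invariantsSubmodule ρH) :=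
  (hW.disjoint_or_le hStable_invariantsSubmodule).resolve_right hWinv

theorem HIrreducible.le_nontrivialPart {W : Submodule K R} (hW : HIrreducible ρH W)
    (hWinv : ¬ W ≤ invariantsSubmodule ρH) : W ≤ nontrivialPart ρH :=
  le_sSup ⟨hW, hWinv⟩

theorem map_nontrivialPart_le {f : R →ₗ[K] R}
    (hf : ∀ (h : H) (x : R), f (ρH h x) = ρH h (f x)) :
    (nontrivialPart ρH).map f ≤ nontrivialPart ρH := by
  rw [map_le_iff_le_comap]
  refine sSup_le fun W ⟨hW, hWinv⟩ => map_le_iff_le_comap.mp ?_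
  rcases hW.disjoint_or_le (HStable.bot.comap hf) with hker | hker
  · have hne : W.map f ≠ ⊥ := fun h0 => hW.1 (hker.eq_bot_of_le (map_le_iff_le_comap.mp h0.le))
    refine (hW.map hf hne).le_nontrivialPart fun hinv => hWinv fun w hw h => ?_
    have hmem : ρH h w - w ∈ (⊥ : Submodule K R).comap f := by
      rw [mem_comap, map_sub, hf, hinv (mem_map_of_mem hw) h, sub_self]
      exact zero_mem _
    exact sub_eq_zero.mp (disjoint_def.mp hker _ (sub_mem (hW.2.1 h w hw) hw) hmem)
  · exact (map_le_iff_le_comap.mpr hker).trans (by simp)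

theorem mul_mem_nontrivialPart {s t : R} (hs : s ∈ invariantsSubalgebra ρH)
    (ht : t ∈ nontrivialPart ρH) : s * t ∈ nontrivialPart ρH :=
  map_nontrivialPart_le (f := LinearMap.mulLeft K s) (fun h x => by simp [hs h])
    (mem_map_of_mem ht)

theorem disjoint_sup_invariantsSubmodule {W V : Submodule K R} (hW : HIrreducible ρH W)
    (hWinv : ¬ W ≤ invariantsSubmodule ρH) (hV : HStable ρH V)
    (hVinv : Disjoint V (invariantsSubmodule ρH)) :
    Disjoint (W ⊔ V) (invariantsSubmodule ρH) := by
  rcases hW.disjoint_or_le hV with hWV | hWV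
  · rw [disjoint_def]
    rintro _ hx hinv
    obtain ⟨w, hw, v, hv, rfl⟩ := mem_sup.mp hx
    -- The `W`- and `V`-components of an invariant vector are invariant, since `W ⊓ V = ⊥`.
    have hwinv : w ∈ invariantsSubmodule ρH := fun h => by
      have hsum : ρH h w + ρH h v = w + v := (map_add _ w v).symm.trans (hinv h)
      have hmem : ρH h w - w ∈ V := by
        rw [show ρH h w - w = -(ρH h v - v) by linear_combination hsum]
        exact neg_mem (sub_mem (hV h v hv) hv)
      exact sub_eq_zero.mp (disjoint_def.mp hWV _ (sub_mem (hW.2.1 h w hw) hw) hmem)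
    have hw0 : w = 0 := disjoint_def.mp (hW.disjoint_invariantsSubmodule hWinv) w hw hwinv
    subst hw0
    rw [zero_add] at hinv ⊢
    exact disjoint_def.mp hVinv v hv hinv
  · rwa [sup_eq_right.mpr hWV]

theorem disjoint_finset_sup_invariantsSubmodule (t : Finset (Submodule K R))
    (ht : ∀ W ∈ t, HIrreducible ρH W ∧ ¬ W ≤ invariantsSubmodule ρH) :
    Disjoint (t.sup id) (invariantsSubmodule ρH) := by
  classical
  induction t using Finset.induction_on with
  | empty => simp
  | insert W t _ ih =>
    simp only [Finset.mem_insert, forall_eq_or_imp] at ht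
    rw [Finset.sup_insert]
    refine disjoint_sup_invariantsSubmodule ht.1.1 ht.1.2 ?_ (ih ht.2)
    rw [Finset.sup_id_eq_sSup]
    exact hStable_sSup fun V hV => (ht.2 V hV).1.2.1

theorem disjoint_invariantsSubmodule_nontrivialPart :
    Disjoint (invariantsSubmodule ρH) (nontrivialPart ρH) := by
  rw [disjoint_iff, nontrivialPart, inf_sSup_eq_iSup_inf_sup_finset, iSup₂_eq_bot]
  exact fun t ht => disjoint_iff.mp (disjoint_finset_sup_invariantsSubmodule t ht).symm

theorem codisjoint_invariantsSubmodule_nontrivialPart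
    (hlocfin : ∀ f : R, ∃ U : Submodule K R, FiniteDimensional K U ∧ HStable ρH U ∧ f ∈ U)
    (hcompred : ∀ U : Submodule K R, FiniteDimensional K U → HStable ρH U →
      U = sSup {W | W ≤ U ∧ HIrreducible ρH W}) :
    Codisjoint (invariantsSubmodule ρH) (nontrivialPart ρH) := by
  rw [codisjoint_iff_le_sup]
  intro x _
  obtain ⟨U, hfin, hU, hxU⟩ := hlocfin x
  rw [hcompred U hfin hU] at hxU
  refine (sSup_le fun W hW => ?_ : _ ≤ invariantsSubmodule ρH ⊔ nontrivialPart ρH) hxU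
  by_cases hWinv : W ≤ invariantsSubmodule ρH
  · exact le_sup_of_le_left hWinv
  · exact le_sup_of_le_right (hW.2.le_nontrivialPart hWinv)

section Reynolds

variable (hc : IsCompl (invariantsSubmodule ρH) (nontrivialPart ρH))

theorem projection_invariantsSubmodule_mul {s : R} (hs : s ∈ invariantsSubalgebra ρH) (x : R) :
    (invariantsSubmodule ρH).projection _ hc (s * x) =
      s * (invariantsSubmodule ρH).projection _ hc x := by
  conv_lhs => rw [← projection_add_projection_eq_self hc x, mul_add, map_add]
  rw [projection_apply_of_mem_right hc (mul_mem_nontrivialPart hs (projection_apply_mem _ x)),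
    add_zero, projection_apply_of_mem_left hc]
  exact (invariantsSubalgebra ρH).mul_mem hs (projection_apply_mem hc x)

noncomputable def reynolds : R →ₗ[invariantsSubalgebra ρH] invariantsSubalgebra ρH where
  toFun x := ⟨_, projection_apply_mem hc x⟩
  map_add' x y := Subtype.ext (map_add _ x y)
  map_smul' s x := Subtype.ext (projection_invariantsSubmodule_mul hc s.2 x)

theorem reynolds_algebraMap (a : invariantsSubalgebra ρH) :
    reynolds hc (algebraMap _ R a) = a :=
  Subtype.ext (projection_apply_of_mem_left hc a.2)

end Reynolds

end Invariants

/-- if `G` and `H` act on the `K`-algebra `R` by commuting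
`K`-algebra automorphisms, `H` acting locally finitely and completely reducibly,
and `R` is `G`-Noetherian (every ascending chain of `G`-stable ideals of `R`
stabilises), then the invariant ring `R^H` is `G`-Noetherian: every ascending
chain of `G`-stable ideals of `R^H` stabilises. -/
theorem ringGNoetherian_invariants
    {K R G H : Type*} [Field K] [CommRing R] [Algebra K R] [Group G] [Group H]
    (ρG : G →* (R ≃ₐ[K] R)) (ρH : H →* (R ≃ₐ[K] R))
    (hcomm : ∀ (g : G) (h : H) (r : R), ρG g (ρH h r) = ρH h (ρG g r))
    (hlocfin : ∀ f : R, ∃ U : Submodule K R,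
      FiniteDimensional K U ∧ HStable ρH U ∧ f ∈ U)
    (hcompred : ∀ U : Submodule K R, FiniteDimensional K U → HStable ρH U →
      U = sSup {W | W ≤ U ∧ HIrreducible ρH W})
    (hR : ∀ I : ℕ → Ideal R, (∀ n, I n ≤ I (n + 1)) →
      (∀ n (g : G), ∀ x ∈ I n, ρG g x ∈ I n) →
      ∃ m, ∀ n, m ≤ n → I n = I m) :
    ∀ J : ℕ → Ideal (invariantsSubalgebra ρH), (∀ n, J n ≤ J (n + 1)) →
      (∀ n (g : G), ∀ x ∈ J n, ∀ y : invariantsSubalgebra ρH,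
        (y : R) = ρG g (x : R) → y ∈ J n) →
      ∃ m, ∀ n, m ≤ n → J n = J m := by
  intro J hJ hJG
  have hc : IsCompl (invariantsSubmodule ρH) (nontrivialPart ρH) :=
    ⟨disjoint_invariantsSubmodule_nontrivialPart,
      codisjoint_invariantsSubmodule_nontrivialPart hlocfin hcompred⟩
  have hcontract := Ideal.comap_map_eq_self_of_retraction (reynolds hc) (reynolds_algebraMap hc)
  obtain ⟨m, hm⟩ := hR (fun n => (J n).map (algebraMap _ R)) (fun n => Ideal.map_mono (hJ n))
    (fun n g => map_algebraMap_invariantsSubalgebra_stable (hcomm g) (J n) (hJG n g))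
  exact ⟨m, fun n hn => by rw [← hcontract (J n), hm n hn, hcontract]⟩
end

section
/- The infinite off-diagonal matrix space is not Sym(ℕ)-Noetherian: in the polynomial ring K[y_{ij} : i, j ∈ ℕ, i ≠ j] with Sym(ℕ) acting by simultaneous row and column permutations, the descending chain of Sym(ℕ)-stable Zariski-closed subsets X_i := {p : f_j(g·p) = 0 for all j ≤ i and all g ∈ Sym(ℕ)}, where f_m := y_{12}y_{23}···y_{m-1,m}y_{m1} is the m-cycle monomial, does not stabilise. -/
/-!
Closedness and `Sym(ℕ)`-stability of `X_i` are formal: `X_i` is cut out by the polynomials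
`f_j ∘ σ`, and the action permutes them. For strictness, `f_j(σ · p_m)` is a product over the
edges `i → i + 1` of the `j`-cycle, so it is nonzero only if `σ` sends every such edge to an
edge of the `m`-cycle. Reading `σ` modulo `m`, this is a closed walk of length `j` that adds `1`
at every step, whence `m ∣ j`. So `p_m ∈ X_i` for `i < m`, while `f_m(p_m) = 1` gives `p_m ∉ X_m`.
-/

open MvPolynomial

/-- Index set of off-diagonal matrix entries. -/
def OffDiag : Type := {q : ℕ × ℕ // q.1 ≠ q.2}

variable (K : Type*) [Field K]

/-- The `m`-cycle monomial `f_m = y_{12} y_{23} ⋯ y_{m-1,m} y_{m,1}` (for `m ≥ 2`). -/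
noncomputable def cycleMon (m : ℕ) (hm : 2 ≤ m) : MvPolynomial OffDiag K :=
  ∏ i ∈ (Finset.Icc 1 m).attach,
    X (⟨(i.1, if i.1 = m then 1 else i.1 + 1), by
      have := Finset.mem_Icc.mp i.2
      dsimp only
      split_ifs <;> omega⟩ : OffDiag)

/-- `Sym(ℕ)` acting on off-diagonal matrices (points) by simultaneous row and
column permutation. -/
def actP (σ : Equiv.Perm ℕ) (p : OffDiag → K) : OffDiag → K :=
  fun q => p ⟨(σ q.1.1, σ q.1.2), fun h => q.2 (σ.injective h)⟩

/-- The Zariski topology on the space of off-diagonal matrices over `K`. -/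
def offDiagZariski : TopologicalSpace (OffDiag → K) :=
  TopologicalSpace.generateFrom {U | ∃ f : MvPolynomial OffDiag K,
    U = {p : OffDiag → K | eval p f ≠ 0}}

/-- The chain `X_i := {p | f_j(g • p) = 0 for all 2 ≤ j ≤ i and all g ∈ Sym(ℕ)}`. -/
def cycleChain (i : ℕ) : Set (OffDiag → K) :=
  {p | ∀ j (hj : 2 ≤ j), j ≤ i → ∀ σ : Equiv.Perm ℕ, eval (actP K σ p) (cycleMon K j hj) = 0}

/-- Successor on the cycle `1 → 2 → ⋯ → m → 1`, as used in `cycleMon`. -/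
def cycleSucc (m a : ℕ) : ℕ := if a = m then 1 else a + 1

lemma self_ne_cycleSucc {m : ℕ} (hm : 2 ≤ m) (a : ℕ) : a ≠ cycleSucc m a := by
  unfold cycleSucc
  split_ifs <;> omega

lemma cast_cycleSucc (m a : ℕ) : ((cycleSucc m a : ℕ) : ZMod m) = a + 1 := by
  unfold cycleSucc
  split_ifs with h
  · simp [h]
  · push_cast; rfl

lemma natCast_eq_zero_of_step_eq_add_one {G : Type*} [AddGroupWithOne G] {n : ℕ} (hn : 1 ≤ n)
    (g : ℕ → G) (hstep : ∀ i ∈ Finset.Icc 1 n, g (cycleSucc n i) = g i + 1) : (n : G) = 0 := by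
  obtain ⟨n, rfl⟩ : ∃ k, n = k + 1 := ⟨n - 1, by omega⟩
  have hwalk : ∀ k ≤ n, g (k + 1) = g 1 + k := by
    intro k hk
    induction k with
    | zero => simp
    | succ k ih =>
      have h := hstep (k + 1) (Finset.mem_Icc.mpr ⟨by omega, by omega⟩)
      rw [cycleSucc, if_neg (by omega)] at h
      rw [h, ih (by omega), Nat.cast_succ, add_assoc]
  have hclose := hstep (n + 1) (Finset.mem_Icc.mpr ⟨by omega, le_rfl⟩)
  rw [cycleSucc, if_pos rfl, hwalk n le_rfl, add_assoc, ← Nat.cast_succ] at hclose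
  exact left_eq_add.mp hclose

lemma eval_cycleMon (p : OffDiag → K) {m : ℕ} (hm : 2 ≤ m) :
    eval p (cycleMon K m hm) =
      ∏ i ∈ Finset.Icc 1 m, p ⟨(i, cycleSucc m i), self_ne_cycleSucc hm i⟩ := by
  rw [cycleMon, map_prod, ← Finset.prod_attach (Finset.Icc 1 m)]
  exact Finset.prod_congr rfl fun i _ => eval_X ..

namespace OffDiag

/-- The action of a permutation on index pairs; `actP` is precomposition with it. -/
def permute (σ : Equiv.Perm ℕ) (q : OffDiag) : OffDiag :=
  ⟨(σ q.1.1, σ q.1.2), fun h => q.2 (σ.injective h)⟩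

end OffDiag

lemma eval_actP (σ : Equiv.Perm ℕ) (p : OffDiag → K) (f : MvPolynomial OffDiag K) :
    eval (actP K σ p) f = eval p (rename (OffDiag.permute σ) f) := by
  rw [eval_rename]
  rfl

section Zariski

attribute [local instance] offDiagZariski

lemma isClosed_setOf_eval_eq_zero (f : MvPolynomial OffDiag K) :
    IsClosed {p | eval p f = 0} :=
  isOpen_compl_iff.mp (TopologicalSpace.GenerateOpen.basic _ ⟨f, rfl⟩)

lemma isClosed_cycleChain (i : ℕ) : IsClosed (cycleChain K i) := by
  have hinter : cycleChain K i = ⋂ (j) (hj : 2 ≤ j) (_ : j ≤ i) (σ : Equiv.Perm ℕ),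
      {p | eval p (rename (OffDiag.permute σ) (cycleMon K j hj)) = 0} := by
    ext p
    simp only [cycleChain, Set.mem_iInter, Set.mem_ofPred, eval_actP]
  rw [hinter]
  exact isClosed_iInter fun j => isClosed_iInter fun hj => isClosed_iInter fun _ =>
    isClosed_iInter fun σ => isClosed_setOf_eval_eq_zero K _

end Zariski

lemma cycleChain_antitone : Antitone (cycleChain K) :=
  fun _ _ hij _ hp j hj hji σ => hp j hj (hji.trans hij) σ

-- `actP K τ (actP K σ p)` is `actP K (σ * τ) p` by definition.
lemma actP_mem_cycleChain {i : ℕ} (σ : Equiv.Perm ℕ) {p : OffDiag → K}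
    (hp : p ∈ cycleChain K i) : actP K σ p ∈ cycleChain K i :=
  fun j hj hji τ => hp j hj hji (σ * τ)

/-- The point `p_m`: the adjacency matrix of the cycle `1 → 2 → ⋯ → m → 1`. -/
def cyclePoint (m : ℕ) : OffDiag → K :=
  fun q => if q.1.1 ∈ Finset.Icc 1 m ∧ q.1.2 = cycleSucc m q.1.1 then 1 else 0

lemma eval_cyclePoint_cycleMon {m : ℕ} (hm : 2 ≤ m) :
    eval (cyclePoint K m) (cycleMon K m hm) = 1 := by
  rw [eval_cycleMon]
  exact Finset.prod_eq_one fun i hi => if_pos ⟨hi, rfl⟩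

lemma dvd_of_eval_actP_cyclePoint_ne_zero {m j : ℕ} (hj : 2 ≤ j) (σ : Equiv.Perm ℕ)
    (h : eval (actP K σ (cyclePoint K m)) (cycleMon K j hj) ≠ 0) : m ∣ j := by
  rw [eval_cycleMon] at h
  have hedge : ∀ i ∈ Finset.Icc 1 j, σ (cycleSucc j i) = cycleSucc m (σ i) := by
    intro i hi
    by_contra hne
    exact Finset.prod_ne_zero_iff.mp h i hi (if_neg fun hc => hne hc.2)
  rw [← ZMod.natCast_eq_zero_iff]
  refine natCast_eq_zero_of_step_eq_add_one (by omega) (fun i => (σ i : ZMod m)) fun i hi => ?_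
  rw [hedge i hi, cast_cycleSucc]

lemma cyclePoint_mem_cycleChain {i m : ℕ} (him : i < m) : cyclePoint K m ∈ cycleChain K i := by
  intro j hj hji σ
  by_contra h
  have := Nat.le_of_dvd (by omega) (dvd_of_eval_actP_cyclePoint_ne_zero K hj σ h)
  omega

lemma cyclePoint_not_mem_cycleChain {m : ℕ} (hm : 2 ≤ m) : cyclePoint K m ∉ cycleChain K m :=
  fun h => one_ne_zero <| (eval_cyclePoint_cycleMon K hm).symm.trans (h m hm le_rfl 1)

/-- the infinite off-diagonal matrix space is not
`Sym(ℕ)`-Noetherian: the `X_i` form a descending chain of `Sym(ℕ)`-stable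
Zariski-closed subsets which does not stabilise. -/
theorem offDiag_not_symNoetherian :
    (∀ i, @IsClosed _ (offDiagZariski K) (cycleChain K i)) ∧
    (∀ i, cycleChain K (i + 1) ⊆ cycleChain K i) ∧
    (∀ i (σ : Equiv.Perm ℕ), ∀ p ∈ cycleChain K i, actP K σ p ∈ cycleChain K i) ∧
    ¬ ∃ m, ∀ n, m ≤ n → cycleChain K n = cycleChain K m := by
  refine ⟨isClosed_cycleChain K, fun i => cycleChain_antitone K i.le_succ,
    fun _ σ _ hp => actP_mem_cycleChain K σ hp, ?_⟩
  rintro ⟨m, hstable⟩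
  have hmem : cyclePoint K (m + 2) ∈ cycleChain K (m + 2) := by
    rw [hstable (m + 2) (by omega)]
    exact cyclePoint_mem_cycleChain K (by omega)
  exact cyclePoint_not_mem_cycleChain K (by omega) hmem
end

section
/- Let A_n = Spec T_n (n ≥ 1) be affine schemes over a field K with closed embeddings τ_{n,n+1} : A_n → A_{n+1} and morphisms π_{n+1,n} : A_{n+1} → A_n satisfying π_{n+1,n} ∘ τ_{n,n+1} = id; let Y_n ⊆ A_n be closed subschemes mapped into each other by both maps; let G_1 ⊆ G_2 ⊆ ... be groups with G_n acting on A_n stabilising Y_n, with π_{n+1,n} being G_n-equivariant, and assume for all q ≥ n ≥ m and g ∈ G_q there exist p ≤ m, g' ∈ G_n, g'' ∈ G_m with π_{q,m} g τ_{n,q} = g'' τ_{p,m} π_{n,p} g'. Let A_∞, Y_∞, G be the corresponding limits. Then for any K-algebra S and any fixed m, the following are equivalent: (1) for all n ≥ m, Y_n(S) = {y ∈ A_n(S) : π_{n,m}(g·y) ∈ Y_m(S) for all g ∈ G_n}; (2) Y_∞(S) = {y ∈ A_∞(S) : π_{∞,m}(g·y) ∈ Y_m(S) for all g ∈ G}.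 -/
/-!
Direction (1) ⇒ (2): for a compatible family `y = (y_n)` and `n ≥ m`, the orbit condition at
level `n` is the one of (1), so `y_n ∈ Y_n(S)`; for `n < m` one has `y_n = y_m ∘ π_{m,n}^*` and
`π_{m,n}^*` maps `I_n` into `I_m`.

Direction (2) ⇒ (1): a point `y ∈ A_n(S)` satisfying the orbit condition at level `n` is pushed
to `A_∞(S)` along `τ_{n,∞}`. Its orbit condition at a level `q ≤ n` follows from the
`G_q`-equivariance of `π`, and at a level `q > n` from (*), which rewrites
`π_{q,m} g τ_{n,q}` as `g'' τ_{p,m} π_{n,p} g'`, a composite that again only sees the orbit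
condition at level `n` and the ideals `I_p`, `I_m`. By (2) the pushed point lies in `Y_∞(S)`, so
its `n`-th coordinate `y` lies in `Y_n(S)`.
-/

section ChainSetup

variable {K : Type*} [Field K]
variable {T : ℕ → Type*} [∀ n, CommRing (T n)] [∀ n, Algebra K (T n)]

/-- Composite `π_{n,m}^* : T m →ₐ T n` of the one-step duals
`πs k : T k →ₐ T (k+1)` of the projections `π_{k+1,k} : A_{k+1} → A_k`. -/
noncomputable def piB (πs : ∀ n, T n →ₐ[K] T (n + 1)) {m n : ℕ} (h : m ≤ n) :
    T m →ₐ[K] T n :=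
  Nat.leRecOn (C := fun k => T m →ₐ[K] T k) h
    (fun {k} f => (πs k).comp f) (AlgHom.id K (T m))

/-- Composite `τ_{m,n}^* : T n →ₐ T m` of the one-step duals
`τs k : T (k+1) →ₐ T k` of the closed embeddings `τ_{k,k+1} : A_k → A_{k+1}`. -/
noncomputable def tauB (τs : ∀ n, T (n + 1) →ₐ[K] T n) {m n : ℕ} (h : m ≤ n) :
    T n →ₐ[K] T m :=
  Nat.leRecOn (C := fun k => T k →ₐ[K] T m) h
    (fun {k} f => f.comp (τs k)) (AlgHom.id K (T m))

end ChainSetup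

section Chain

variable {K : Type*} [Field K]
variable {T : ℕ → Type*} [∀ n, CommRing (T n)] [∀ n, Algebra K (T n)]
variable (πs : ∀ n, T n →ₐ[K] T (n + 1)) (τs : ∀ n, T (n + 1) →ₐ[K] T n)

@[simp]
lemma piB_self {m : ℕ} (h : m ≤ m) : piB πs h = AlgHom.id K (T m) :=
  Nat.leRecOn_self _

lemma piB_succ {m n : ℕ} (h : m ≤ n) (h' : m ≤ n + 1) :
    piB πs h' = (πs n).comp (piB πs h) :=
  Nat.leRecOn_succ h _

lemma piB_le_succ (n : ℕ) : piB πs (Nat.le_succ n) = πs n := by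
  rw [piB_succ πs le_rfl, piB_self, AlgHom.comp_id]

@[simp]
lemma tauB_self {m : ℕ} (h : m ≤ m) : tauB τs h = AlgHom.id K (T m) :=
  Nat.leRecOn_self _

lemma tauB_succ {m n : ℕ} (h : m ≤ n) (h' : m ≤ n + 1) :
    tauB τs h' = (tauB τs h).comp (τs n) :=
  Nat.leRecOn_succ h _

lemma piB_comp_piB {m n q : ℕ} (hmn : m ≤ n) (hnq : n ≤ q) :
    (piB πs hnq).comp (piB πs hmn) = piB πs (hmn.trans hnq) := by
  induction q, hnq using Nat.le_induction with
  | base => rw [piB_self, AlgHom.id_comp]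
  | succ q hnq ih => rw [piB_succ πs hnq, piB_succ πs (hmn.trans hnq), AlgHom.comp_assoc, ih]

lemma piB_piB_apply {m n q : ℕ} (hmn : m ≤ n) (hnq : n ≤ q) (f : T m) :
    piB πs hnq (piB πs hmn f) = piB πs (hmn.trans hnq) f :=
  DFunLike.congr_fun (piB_comp_piB πs hmn hnq) f

lemma piB_mem {I : ∀ n, Ideal (T n)} (hπI : ∀ n, ∀ f ∈ I n, πs n f ∈ I (n + 1))
    {m n : ℕ} (h : m ≤ n) {f : T m} (hf : f ∈ I m) : piB πs h f ∈ I n := by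
  induction n, h using Nat.le_induction with
  | base => rwa [piB_self]
  | succ n hn ih => rw [piB_succ πs hn]; exact hπI n _ ih

lemma tauB_mem {I : ∀ n, Ideal (T n)} (hτI : ∀ n, ∀ f ∈ I (n + 1), τs n f ∈ I n)
    {m n : ℕ} (h : m ≤ n) {f : T n} (hf : f ∈ I n) : tauB τs h f ∈ I m := by
  induction n, h using Nat.le_induction with
  | base => rwa [tauB_self]
  | succ n hn ih => rw [tauB_succ τs hn]; exact ih (hτI n f hf)

lemma piB_act {Γ : Type*} [Group Γ] {Gn : ℕ → Subgroup Γ} (mono : Monotone Gn)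
    {actT : ∀ n, Gn n → (T n ≃ₐ[K] T n)}
    (hπG : ∀ n (g : Γ) (hg : g ∈ Gn n) (x : T n),
      πs n (actT n ⟨g, hg⟩ x) = actT (n + 1) ⟨g, mono (Nat.le_succ n) hg⟩ (πs n x))
    {n q : ℕ} (h : n ≤ q) {g : Γ} (hg : g ∈ Gn n) (x : T n) :
    piB πs h (actT n ⟨g, hg⟩ x) = actT q ⟨g, mono h hg⟩ (piB πs h x) := by
  induction q, h using Nat.le_induction with
  | base => rw [piB_self]; rfl
  | succ q hq ih => simp only [piB_succ πs hq, AlgHom.comp_apply, ih, hπG]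

variable {S : Type*} [CommRing S] [Algebra K S]

lemma comp_piB_of_compatible {y : ∀ n, T n →ₐ[K] S} (hy : ∀ n, (y (n + 1)).comp (πs n) = y n)
    {k l : ℕ} (h : k ≤ l) : (y l).comp (piB πs h) = y k := by
  induction l, h using Nat.le_induction with
  | base => rw [piB_self, AlgHom.comp_id]
  | succ l hl ih => rw [piB_succ πs hl, ← AlgHom.comp_assoc, hy, ih]

lemma vanishes_of_compatible_of_le {I : ∀ n, Ideal (T n)}
    (hπI : ∀ n, ∀ f ∈ I n, πs n f ∈ I (n + 1)) {y : ∀ n, T n →ₐ[K] S}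
    (hy : ∀ n, (y (n + 1)).comp (πs n) = y n) {k l : ℕ} (h : k ≤ l)
    (hl : ∀ f ∈ I l, y l f = 0) : ∀ f ∈ I k, y k f = 0 := by
  intro f hf
  rw [← comp_piB_of_compatible πs hy h]
  exact hl _ (piB_mem πs hπI h hf)

/-- The image `τ_{n,∞}(y) ∈ A_∞(S)` of `y ∈ A_n(S)`: its coordinates are `π_{n,k}(y)` for `k ≤ n`
and `τ_{n,k}(y)` for `k > n`. -/
noncomputable def extendPoint {n : ℕ} (y : T n →ₐ[K] S) (k : ℕ) : T k →ₐ[K] S :=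
  if hk : k ≤ n then y.comp (piB πs hk) else y.comp (tauB τs (le_of_not_ge hk))

variable {πs τs}

lemma extendPoint_of_le {n k : ℕ} (y : T n →ₐ[K] S) (hk : k ≤ n) :
    extendPoint πs τs y k = y.comp (piB πs hk) :=
  dif_pos hk

lemma extendPoint_of_ge {n k : ℕ} (y : T n →ₐ[K] S) (hk : n ≤ k) :
    extendPoint πs τs y k = y.comp (tauB τs hk) := by
  rcases hk.eq_or_lt with rfl | hlt
  · rw [extendPoint_of_le y le_rfl, piB_self, tauB_self]
  · exact dif_neg (not_le.mpr hlt)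

@[simp]
lemma extendPoint_self {n : ℕ} (y : T n →ₐ[K] S) : extendPoint πs τs y n = y := by
  rw [extendPoint_of_le y le_rfl, piB_self, AlgHom.comp_id]

lemma extendPoint_compatible (hτπ : ∀ n, (τs n).comp (πs n) = AlgHom.id K (T n))
    {n : ℕ} (y : T n →ₐ[K] S) (k : ℕ) :
    (extendPoint πs τs y (k + 1)).comp (πs k) = extendPoint πs τs y k := by
  rcases le_or_gt (k + 1) n with hk | hk
  · rw [extendPoint_of_le y hk, extendPoint_of_le y (Nat.le_of_succ_le hk), AlgHom.comp_assoc,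
      ← piB_le_succ πs k, piB_comp_piB]
  · have hnk : n ≤ k := Nat.le_of_lt_succ hk
    rw [extendPoint_of_ge y hk.le, extendPoint_of_ge y hnk, tauB_succ τs hnk, AlgHom.comp_assoc,
      AlgHom.comp_assoc, hτπ, AlgHom.comp_id]

end Chain

section Orbit

variable {K : Type*} [Field K]
variable {T : ℕ → Type*} [∀ n, CommRing (T n)] [∀ n, Algebra K (T n)]
variable {πs : ∀ n, T n →ₐ[K] T (n + 1)} {τs : ∀ n, T (n + 1) →ₐ[K] T n}
variable {I : ∀ n, Ideal (T n)} {Γ : Type*} [Group Γ] {Gn : ℕ → Subgroup Γ}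
variable {actT : ∀ n, Gn n → (T n ≃ₐ[K] T n)} {S : Type*} [CommRing S] [Algebra K S]

variable (πs I actT) in
/-- `π_{n,m}(g·y) ∈ Y_m(S)` for all `g ∈ G_n`. -/
def OrbitVanishes {m n : ℕ} (h : m ≤ n) (y : T n →ₐ[K] S) : Prop :=
  ∀ (g : Γ) (hg : g ∈ Gn n), ∀ f ∈ I m, y (actT n ⟨g, hg⟩ (piB πs h f)) = 0

lemma orbitVanishes_of_vanishes (hπI : ∀ n, ∀ f ∈ I n, πs n f ∈ I (n + 1))
    (hGI : ∀ n (g : Gn n), ∀ f ∈ I n, actT n g f ∈ I n) {m n : ℕ} (h : m ≤ n)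
    {y : T n →ₐ[K] S} (hy : ∀ f ∈ I n, y f = 0) : OrbitVanishes πs I actT h y :=
  fun g hg _ hf => hy _ (hGI n ⟨g, hg⟩ _ (piB_mem πs hπI h hf))

lemma orbitVanishes_extendPoint_of_le (mono : Monotone Gn)
    (hπG : ∀ n (g : Γ) (hg : g ∈ Gn n) (x : T n),
      πs n (actT n ⟨g, hg⟩ x) = actT (n + 1) ⟨g, mono (Nat.le_succ n) hg⟩ (πs n x))
    {m n q : ℕ} (hmq : m ≤ q) (hqn : q ≤ n) {y : T n →ₐ[K] S}
    (hy : OrbitVanishes πs I actT (hmq.trans hqn) y) :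
    OrbitVanishes πs I actT hmq (extendPoint πs τs y q) := by
  intro g hg f hf
  rw [extendPoint_of_le y hqn, AlgHom.comp_apply, piB_act πs mono hπG hqn hg,
    piB_piB_apply]
  exact hy g _ f hf

lemma orbitVanishes_extendPoint_of_ge (hπI : ∀ n, ∀ f ∈ I n, πs n f ∈ I (n + 1))
    (hτI : ∀ n, ∀ f ∈ I (n + 1), τs n f ∈ I n)
    (hGI : ∀ n (g : Gn n), ∀ f ∈ I n, actT n g f ∈ I n)
    {m n q : ℕ} (hmn : m ≤ n) (hnq : n ≤ q) {y : T n →ₐ[K] S}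
    (hy : OrbitVanishes πs I actT hmn y)
    (hstar : ∀ (g : Γ) (hg : g ∈ Gn q),
      ∃ (p : ℕ) (hpm : p ≤ m) (g' : Γ) (hg' : g' ∈ Gn n) (g'' : Γ) (hg'' : g'' ∈ Gn m),
        (tauB τs hnq).comp ((actT q ⟨g, hg⟩).toAlgHom.comp (piB πs (hmn.trans hnq))) =
          (actT n ⟨g', hg'⟩).toAlgHom.comp ((piB πs (hpm.trans hmn)).comp
            ((tauB τs hpm).comp (actT m ⟨g'', hg''⟩).toAlgHom))) :
    OrbitVanishes πs I actT (hmn.trans hnq) (extendPoint πs τs y q) := by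
  intro g hg f hf
  obtain ⟨p, hpm, g', hg', g'', hg'', heq⟩ := hstar g hg
  have hf' : tauB τs hpm (actT m ⟨g'', hg''⟩ f) ∈ I p :=
    tauB_mem τs hτI hpm (hGI m _ f hf)
  have hstar_f := DFunLike.congr_fun heq f
  simp only [AlgHom.comp_apply, AlgEquiv.toAlgHom_apply] at hstar_f
  rw [extendPoint_of_ge y hnq, AlgHom.comp_apply, hstar_f, ← piB_piB_apply πs hpm hmn]
  exact hy g' hg' _ (piB_mem πs hπI hpm hf')

end Orbit

theorem chain_finiteness_equivalence_general
    {K : Type*} [Field K] {S : Type*} [CommRing S] [Algebra K S]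
    {T : ℕ → Type*} [∀ n, CommRing (T n)] [∀ n, Algebra K (T n)]
    (πs : ∀ n, T n →ₐ[K] T (n + 1)) (τs : ∀ n, T (n + 1) →ₐ[K] T n)
    (hτπ : ∀ n, (τs n).comp (πs n) = AlgHom.id K (T n))
    (I : ∀ n, Ideal (T n))
    (hπI : ∀ n, ∀ f ∈ I n, πs n f ∈ I (n + 1))
    (hτI : ∀ n, ∀ f ∈ I (n + 1), τs n f ∈ I n)
    {Γ : Type*} [Group Γ] (Gn : ℕ → Subgroup Γ) (mono : Monotone Gn)
    (actT : ∀ n, (Gn n) → (T n ≃ₐ[K] T n))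
    (hGI : ∀ n (g : Gn n), ∀ f ∈ I n, actT n g f ∈ I n)
    (hπG : ∀ n (g : Γ) (hg : g ∈ Gn n) (x : T n),
      πs n (actT n ⟨g, hg⟩ x) = actT (n + 1) ⟨g, mono (Nat.le_succ n) hg⟩ (πs n x))
    (hstar : ∀ {m n q : ℕ} (hmn : m ≤ n) (hnq : n ≤ q) (g : Γ) (hg : g ∈ Gn q),
      ∃ (p : ℕ) (hpm : p ≤ m) (g' : Γ) (hg' : g' ∈ Gn n) (g'' : Γ) (hg'' : g'' ∈ Gn m),
        (tauB τs hnq).comp ((actT q ⟨g, hg⟩).toAlgHom.comp (piB πs (hmn.trans hnq))) =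
          (actT n ⟨g', hg'⟩).toAlgHom.comp ((piB πs (hpm.trans hmn)).comp
            ((tauB τs hpm).comp (actT m ⟨g'', hg''⟩).toAlgHom)))
    (m : ℕ) :
    (∀ n (h : m ≤ n) (y : T n →ₐ[K] S),
        ((∀ f ∈ I n, y f = 0) ↔
          ∀ (g : Γ) (hg : g ∈ Gn n), ∀ f ∈ I m, y (actT n ⟨g, hg⟩ (piB πs h f)) = 0)) ↔
      (∀ y : ∀ n, T n →ₐ[K] S, (∀ n, (y (n + 1)).comp (πs n) = y n) →
        ((∀ n, ∀ f ∈ I n, y n f = 0) ↔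
          ∀ (q : ℕ) (h : m ≤ q) (g : Γ) (hg : g ∈ Gn q), ∀ f ∈ I m,
            y q (actT q ⟨g, hg⟩ (piB πs h f)) = 0)) := by
  constructor
  · intro H1 y hy
    refine ⟨fun hY q hq => orbitVanishes_of_vanishes hπI hGI hq (hY q), fun horbit n => ?_⟩
    rcases le_total m n with hmn | hnm
    · exact (H1 n hmn (y n)).mpr (horbit n hmn)
    · exact vanishes_of_compatible_of_le πs hπI hy hnm
        ((H1 m le_rfl (y m)).mpr (horbit m le_rfl))
  · intro H2 n hmn y
    refine ⟨orbitVanishes_of_vanishes hπI hGI hmn, fun hy => ?_⟩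
    have hext := (H2 (extendPoint πs τs y) (extendPoint_compatible hτπ y)).mpr fun q hmq =>
      (le_total q n).elim
        (fun hqn => orbitVanishes_extendPoint_of_le mono hπG hmq hqn hy)
        (fun hnq => orbitVanishes_extendPoint_of_ge hπI hτI hGI hmn hnq hy (hstar hmn hnq))
    simpa using hext n

/-- Lemma on chains of schemes: in the set-up of affine schemes
`A_n = Spec T_n` with embeddings `τ`, projections `π`, closed subschemes
`Y_n = V(I_n)`, and nested groups `G_n` acting compatibly and satisfying the
commutation condition (*), for any `K`-algebra `S` and any fixed `m` the
following are equivalent: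
(1) for all `n ≥ m`, `Y_n(S) = {y ∈ A_n(S) : π_{n,m}(g·y) ∈ Y_m(S) ∀ g ∈ G_n}`;
(2) `Y_∞(S) = {y ∈ A_∞(S) : π_{∞,m}(g·y) ∈ Y_m(S) ∀ g ∈ G}`,
where `A_∞(S)` is realised as compatible families `(y_n)_n` of `S`-points. -/
theorem chain_finiteness_equivalence
    {K : Type*} [Field K] {S : Type*} [CommRing S] [Algebra K S]
    {T : ℕ → Type*} [∀ n, CommRing (T n)] [∀ n, Algebra K (T n)]
    (πs : ∀ n, T n →ₐ[K] T (n + 1)) (τs : ∀ n, T (n + 1) →ₐ[K] T n)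
    (hτπ : ∀ n, (τs n).comp (πs n) = AlgHom.id K (T n))
    (I : ∀ n, Ideal (T n))
    (hπI : ∀ n, ∀ f ∈ I n, πs n f ∈ I (n + 1))
    (hτI : ∀ n, ∀ f ∈ I (n + 1), τs n f ∈ I n)
    {Γ : Type*} [Group Γ] (Gn : ℕ → Subgroup Γ) (mono : Monotone Gn)
    (actT : ∀ n, (Gn n) → (T n ≃ₐ[K] T n))
    (hone : ∀ n (x : T n), actT n 1 x = x)
    (hmul : ∀ n (g₁ g₂ : Gn n) (x : T n),
      actT n (g₁ * g₂) x = actT n g₁ (actT n g₂ x))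
    (hGI : ∀ n (g : Gn n), ∀ f ∈ I n, actT n g f ∈ I n)
    (hπG : ∀ n (g : Γ) (hg : g ∈ Gn n) (x : T n),
      πs n (actT n ⟨g, hg⟩ x) = actT (n + 1) ⟨g, mono (Nat.le_succ n) hg⟩ (πs n x))
    (hstar : ∀ {m n q : ℕ} (hmn : m ≤ n) (hnq : n ≤ q) (g : Γ) (hg : g ∈ Gn q),
      ∃ (p : ℕ) (hpm : p ≤ m) (g' : Γ) (hg' : g' ∈ Gn n) (g'' : Γ) (hg'' : g'' ∈ Gn m),
        (tauB τs hnq).comp ((actT q ⟨g, hg⟩).toAlgHom.comp (piB πs (hmn.trans hnq))) =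
          (actT n ⟨g', hg'⟩).toAlgHom.comp ((piB πs (hpm.trans hmn)).comp
            ((tauB τs hpm).comp (actT m ⟨g'', hg''⟩).toAlgHom)))
    (m : ℕ) :
    (∀ n (h : m ≤ n) (y : T n →ₐ[K] S),
        ((∀ f ∈ I n, y f = 0) ↔
          ∀ (g : Γ) (hg : g ∈ Gn n), ∀ f ∈ I m, y (actT n ⟨g, hg⟩ (piB πs h f)) = 0)) ↔
      (∀ y : ∀ n, T n →ₐ[K] S, (∀ n, (y (n + 1)).comp (πs n) = y n) →
        ((∀ n, ∀ f ∈ I n, y n f = 0) ↔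
          ∀ (q : ℕ) (h : m ≤ q) (g : Γ) (hg : g ∈ Gn q), ∀ f ∈ I m,
            y q (actT q ⟨g, hg⟩ (piB πs h f)) = 0)) :=
  chain_finiteness_equivalence_general πs τs hτπ I hπI hτI Gn mono actT hGI hπG hstar m
end
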